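/- The double series ∑_{n=1}^∞ ∑_{k=1}^∞ (1/k!) · Γ(2k)Γ(n+k)/Γ(1+n+2k) · H_{n+k-1} equals (3/2)ζ(3). -/

import Mathlib

/-!
For fixed `k`, put `m = n + k + 1`: the summand is `(2k+1)!/(k+1)! · m!/(m+k+2)! · H m`,
and `m!/(m+k+1)! · (H m/(k+1) + 1/(k+1)²)` is a discrete antiderivative of
`m!/(m+k+2)! · H m`, so the inner series telescopes to `H k/(2(k+1)²) + 1/(k+1)³`.
All terms are nonnegative, so the order of summation is irrelevant, and the double series
is `ζ(3)` plus half of Euler's sum `∑ H k/(k+1)² = ∑_{j<k} 1/((j+1)(k+1)²)`.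
Writing `k = j + m + 1` and symmetrising in `j, m` turns twice Euler's sum into
`∑_{a,b≥1} 1/(ab(a+b))`, whose rows sum to `H b/b² = H (b-1)/b² + 1/b³`; hence twice
Euler's sum is Euler's sum plus `ζ(3)`.
-/

open scoped BigOperators

noncomputable def H (n : ℕ) : ℝ := ∑ j ∈ Finset.range n, (1:ℝ)/(j+1)

noncomputable def zeta3 : ℝ := ∑' n : ℕ, (1:ℝ)/((n:ℝ)+1)^3

open Filter Topology Finset
open scoped Nat

lemma H_succ (n : ℕ) : H (n + 1) = H n + 1 / ((n : ℝ) + 1) := sum_range_succ _ _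

lemma H_nonneg (n : ℕ) : 0 ≤ H n := sum_nonneg fun _ _ => by positivity

lemma tendsto_H_add_one_div :
    Tendsto (fun n : ℕ => (H n + 1) / ((n : ℝ) + 1)) atTop (𝓝 0) := by
  have hcesaro : Tendsto (fun n : ℕ => ((n : ℝ) + 1)⁻¹ * H (n + 1)) atTop (𝓝 0) := by
    have := (tendsto_one_div_add_atTop_nhds_zero_nat.cesaro).comp (tendsto_add_atTop_nat 1)
    simpa [H, Function.comp_def] using this
  have hlim := hcesaro.add tendsto_one_div_add_atTop_nhds_zero_nat
  rw [add_zero] at hlim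
  refine squeeze_zero (fun n => by positivity [H_nonneg n]) (fun n => ?_) hlim
  rw [add_div, inv_mul_eq_div]
  gcongr
  rw [H_succ]
  exact le_add_of_nonneg_right (by positivity)

lemma hasSum_of_sub_succ {F f : ℕ → ℝ} (hf : 0 ≤ f) (hF : ∀ n, F n - F (n + 1) = f n)
    (hlim : Tendsto F atTop (𝓝 0)) : HasSum f (F 0) := by
  rw [hasSum_iff_tendsto_nat_of_nonneg hf]
  simp_rw [← hF, sum_range_sub']
  simpa using tendsto_const_nhds.sub hlim

lemma hasSum_uncurry_of_nonneg {α β : Type*} {f : α → β → ℝ} {g : α → ℝ} {a : ℝ}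
    (hf : ∀ x y, 0 ≤ f x y) (hrow : ∀ x, HasSum (f x) (g x)) (hg : HasSum g a) :
    HasSum (Function.uncurry f) a := by
  have hsum : Summable (Function.uncurry f) :=
    (summable_prod_of_nonneg fun p => hf p.1 p.2).mpr
      ⟨fun x => (hrow x).summable, by simpa only [(hrow _).tsum_eq] using hg.summable⟩
  exact (hsum.hasSum.prod_fiberwise hrow).unique hg ▸ hsum.hasSum

noncomputable def factorialHarmonicTail (k l : ℕ) : ℝ :=
  (l ! : ℝ) / (l + k + 1)! * (H l / (k + 1) + 1 / ((k : ℝ) + 1) ^ 2)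

lemma factorialHarmonicTail_sub_succ (k l : ℕ) :
    factorialHarmonicTail k l - factorialHarmonicTail k (l + 1) =
      (l ! : ℝ) / (l + k + 2)! * H l := by
  rw [factorialHarmonicTail, factorialHarmonicTail, H_succ,
    show l + 1 + k + 1 = l + k + 1 + 1 by ring, Nat.factorial_succ (l + k + 1),
    Nat.factorial_succ l]
  push_cast
  field_simp
  ring

lemma factorialHarmonicTail_le (k l : ℕ) :
    factorialHarmonicTail k l ≤ (H l + 1) / ((l : ℝ) + 1) := by
  have hk : (1 : ℝ) ≤ k + 1 := by simp
  have hratio : (l ! : ℝ) / (l + k + 1)! ≤ 1 / ((l : ℝ) + 1) := by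
    rw [div_le_div_iff₀ (by positivity) (by positivity), one_mul]
    have := Nat.factorial_le (show l + 1 ≤ l + k + 1 by omega)
    rw [Nat.factorial_succ] at this
    exact_mod_cast (mul_comm (l + 1 : ℕ) _ ▸ this)
  have hH : H l / (k + 1) + 1 / ((k : ℝ) + 1) ^ 2 ≤ H l + 1 := by
    gcongr
    · exact div_le_self (H_nonneg l) hk
    · exact div_le_one_of_le₀ (one_le_pow₀ hk) (by positivity)
  calc factorialHarmonicTail k l ≤ 1 / ((l : ℝ) + 1) * (H l + 1) :=
        mul_le_mul hratio hH (by positivity [H_nonneg l]) (by positivity)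
    _ = (H l + 1) / ((l : ℝ) + 1) := by ring

lemma hasSum_factorial_div_mul_H (k m : ℕ) :
    HasSum (fun n => ((n + m)! : ℝ) / (n + m + k + 2)! * H (n + m))
      (factorialHarmonicTail k m) := by
  have hnonneg (l : ℕ) : 0 ≤ factorialHarmonicTail k l := by
    unfold factorialHarmonicTail; positivity [H_nonneg l]
  simpa using hasSum_of_sub_succ (F := fun n => factorialHarmonicTail k (n + m))
    (fun n => by positivity [H_nonneg (n + m)])
    (fun n => by rw [add_right_comm, factorialHarmonicTail_sub_succ])
    (squeeze_zero (fun n => hnonneg _) (fun n => factorialHarmonicTail_le k (n + m))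
      (tendsto_H_add_one_div.comp (tendsto_add_atTop_nat m)))

lemma hasSum_inner (k : ℕ) :
    HasSum (fun n : ℕ => (1 / ((k + 1)! : ℝ)) *
      (((2 * k + 1)! : ℝ) * (n + k + 1)! / (n + 2 * k + 3)!) * H (n + k + 1))
      (H k / (2 * ((k : ℝ) + 1) ^ 2) + 1 / ((k : ℝ) + 1) ^ 3) := by
  have hval : ((2 * k + 1)! : ℝ) / (k + 1)! * factorialHarmonicTail k (k + 1) =
      H k / (2 * ((k : ℝ) + 1) ^ 2) + 1 / ((k : ℝ) + 1) ^ 3 := by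
    rw [factorialHarmonicTail, show k + 1 + k + 1 = 2 * k + 1 + 1 by ring,
      Nat.factorial_succ (2 * k + 1), Nat.factorial_succ k, H_succ]
    push_cast
    field_simp
    ring
  refine hval ▸ ((hasSum_factorial_div_mul_H k (k + 1)).mul_left _).congr_fun fun n => ?_
  rw [show n + (k + 1) + k + 2 = n + 2 * k + 3 by ring, ← add_assoc]
  ring

lemma summable_one_div_add_one_pow {p : ℕ} (hp : 1 < p) :
    Summable fun n : ℕ => 1 / ((n : ℝ) + 1) ^ p := by
  simpa using (summable_nat_add_iff 1).mpr (Real.summable_one_div_nat_pow.mpr hp)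

lemma hasSum_one_div_sub_one_div_succ {a : ℝ} (ha : 0 < a) :
    HasSum (fun j : ℕ => 1 / (j + a) - 1 / (j + 1 + a)) (1 / a) := by
  have hlim : Tendsto (fun j : ℕ => 1 / ((j : ℝ) + a)) atTop (𝓝 0) :=
    tendsto_const_nhds.div_atTop (tendsto_natCast_atTop_atTop.atTop_add tendsto_const_nhds)
  simpa using hasSum_of_sub_succ (F := fun j : ℕ => 1 / ((j : ℝ) + a))
    (fun j => sub_nonneg.mpr (one_div_le_one_div_of_le (by positivity) (by linarith)))
    (fun j => by push_cast; ring_nf) hlim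

lemma hasSum_one_div_sub_one_div_add (p : ℕ) :
    HasSum (fun j : ℕ => 1 / ((j : ℝ) + 1) - 1 / (j + (p + 1))) (H p) := by
  induction p with
  | zero => simp [H]
  | succ p ih =>
    rw [H_succ]
    have hstep := hasSum_one_div_sub_one_div_succ (a := (p : ℝ) + 1) (by positivity)
    refine (ih.add hstep).congr_fun fun j => ?_
    push_cast
    ring_nf

noncomputable def eulerKernel (j m : ℕ) : ℝ := 1 / (((j : ℝ) + 1) * ((j : ℝ) + m + 2) ^ 2)

lemma eulerKernel_nonneg (j m : ℕ) : 0 ≤ eulerKernel j m := by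
  unfold eulerKernel; positivity

lemma eulerKernel_le (j m : ℕ) :
    eulerKernel j m ≤
      1 / ((j : ℝ) + 1) * (1 / (m + ((j : ℝ) + 1)) - 1 / (m + 1 + ((j : ℝ) + 1))) := by
  rw [eulerKernel, div_sub_div _ _ (by positivity) (by positivity), div_mul_div_comm]
  gcongr <;> nlinarith

lemma summable_eulerKernel : Summable fun p : ℕ × ℕ => eulerKernel p.1 p.2 := by
  have hrow (j : ℕ) :=
    (hasSum_one_div_sub_one_div_succ (a := (j : ℝ) + 1) (by positivity)).mul_left
      (1 / ((j : ℝ) + 1))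
  have hsummable (j : ℕ) : Summable (eulerKernel j) :=
    (hrow j).summable.of_nonneg_of_le (eulerKernel_nonneg j) (eulerKernel_le j)
  have hsq : Summable fun j : ℕ => 1 / ((j : ℝ) + 1) * (1 / ((j : ℝ) + 1)) :=
    (summable_one_div_add_one_pow one_lt_two).congr fun j => by rw [one_div_mul_one_div, sq]
  refine (summable_prod_of_nonneg fun p => eulerKernel_nonneg p.1 p.2).mpr ⟨hsummable,
    hsq.of_nonneg_of_le (fun j => tsum_nonneg (eulerKernel_nonneg j)) fun j => ?_⟩
  rw [← (hrow j).tsum_eq]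
  exact (hsummable j).tsum_le_tsum (eulerKernel_le j) (hrow j).summable

lemma eulerKernel_add_swap (j m : ℕ) :
    eulerKernel j m + eulerKernel m j =
      1 / (((j : ℝ) + 1) * ((m : ℝ) + 1) * ((j : ℝ) + m + 2)) := by
  unfold eulerKernel
  field_simp
  ring

lemma hasSum_H_div_sq_tsum_eulerKernel :
    HasSum (fun k : ℕ => H k / ((k : ℝ) + 1) ^ 2)
      (∑' p : ℕ × ℕ, eulerKernel p.1 p.2) := by
  -- Euler's sum as a triangular array; `eulerKernel j m` is its entry at `(j + m + 1, j)`.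
  set Q : ℕ × ℕ → ℝ := fun p =>
    if p.2 < p.1 then 1 / (((p.2 : ℝ) + 1) * ((p.1 : ℝ) + 1) ^ 2) else 0
  have hinj : Function.Injective fun p : ℕ × ℕ => (p.1 + p.2 + 1, p.1) := by
    rintro ⟨a, b⟩ ⟨c, d⟩ h
    simp only [Prod.mk.injEq] at h
    ext <;> omega
  have hQ : HasSum Q (∑' p : ℕ × ℕ, eulerKernel p.1 p.2) := by
    rw [← hinj.hasSum_iff]
    · refine summable_eulerKernel.hasSum.congr_fun fun p => ?_
      simp only [Q, Function.comp_apply, eulerKernel, if_pos (by omega : p.1 < p.1 + p.2 + 1)]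
      push_cast
      ring_nf
    · rintro ⟨k, j⟩ hkj
      exact if_neg fun (hjk : j < k) =>
        hkj ⟨(j, k - j - 1), Prod.ext (by dsimp only; omega) rfl⟩
  refine hQ.prod_fiberwise fun k => ?_
  have hrow := hasSum_sum_of_ne_finset_zero (s := range k) (f := fun j => Q (k, j))
    (L := SummationFilter.unconditional ℕ) fun j hj => if_neg (by simpa using hj)
  rw [H, sum_div]
  convert hrow using 1
  exact sum_congr rfl fun j hj => by simp only [Q, if_pos (mem_range.mp hj), div_div]

lemma hasSum_zeta3 : HasSum (fun n : ℕ => 1 / ((n : ℝ) + 1) ^ 3) zeta3 :=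
  (summable_one_div_add_one_pow (by norm_num)).hasSum

lemma hasSum_H_div_sq : HasSum (fun k : ℕ => H k / ((k : ℝ) + 1) ^ 2) zeta3 := by
  set S := ∑' p : ℕ × ℕ, eulerKernel p.1 p.2
  have hS : HasSum (fun k : ℕ => H k / ((k : ℝ) + 1) ^ 2) S :=
    hasSum_H_div_sq_tsum_eulerKernel
  have hP := summable_eulerKernel.hasSum
  have hsym : HasSum (fun p : ℕ × ℕ => eulerKernel p.2 p.1 + eulerKernel p.1 p.2) (S + S) :=
    ((Equiv.prodComm ℕ ℕ).hasSum_iff.mpr hP).add hP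
  have hrows :
      HasSum (fun m : ℕ => H m / ((m : ℝ) + 1) ^ 2 + 1 / ((m : ℝ) + 1) ^ 3) (S + S) := by
    refine hsym.prod_fiberwise fun m => ?_
    have hval : 1 / ((m : ℝ) + 1) ^ 2 * H (m + 1) =
        H m / ((m : ℝ) + 1) ^ 2 + 1 / ((m : ℝ) + 1) ^ 3 := by
      rw [H_succ]
      field_simp
    refine hval ▸ ((hasSum_one_div_sub_one_div_add (m + 1)).mul_left _).congr_fun fun j => ?_
    rw [eulerKernel_add_swap]
    push_cast
    field_simp
    ring
  have hSζ : S = zeta3 := by linarith [hrows.unique (hS.add hasSum_zeta3)]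
  exact hSζ ▸ hS

theorem stmt17 : ∑' n : ℕ, ∑' k : ℕ,
    (1 / (Nat.factorial (k+1) : ℝ)) *
    ((Nat.factorial (2*k+1) : ℝ) * (Nat.factorial (n+k+1) : ℝ) / (Nat.factorial (n+2*k+3) : ℝ))
    * H (n+k+1) = (3/2) * zeta3 := by
  have hsum : HasSum (fun k : ℕ => H k / (2 * ((k : ℝ) + 1) ^ 2) + 1 / ((k : ℝ) + 1) ^ 3)
      ((3 / 2) * zeta3) := by
    refine (show zeta3 / 2 + zeta3 = (3 / 2) * zeta3 by ring) ▸
      ((hasSum_H_div_sq.div_const 2).add hasSum_zeta3).congr_fun fun k => ?_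
    rw [div_div, mul_comm]
  have h := hasSum_uncurry_of_nonneg (fun k n => by positivity [H_nonneg (n + k + 1)])
    hasSum_inner hsum
  rw [h.summable.tsum_comm, tsum_congr fun k => (hasSum_inner k).tsum_eq, hsum.tsum_eq]
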